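/- Let ξ = ∑_{i≥0} λ_i χ_i be a radial unit vector in ℓ²(F_N), where F_N is the free group on N generators with canonical symmetric generating set S of size 2N, and χ_i is the indicator function of the sphere of radius i. Define φ_ξ(g) = ⟪λ(g)ξ, ξ⟫ where λ is the left regular representation. Then for every g ∈ F_N, |φ_ξ(g)| ≤ (|g| + 1)(2N − 1)^{−|g|/2}. -/

import Mathlib

/-!
Write `g = c v` and `h = c w` as reduced words with `c` their longest common prefix, so that
`g⁻¹ h = v⁻¹ w` is reduced. Then `(|h|, |g⁻¹ h|) = (t + m, s + m)` with `t + s = |g|`, and for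
fixed `g ≠ 1`, `t` and `m` the word `c` is forced while `w` is a reduced word of length `m` whose
first letter must avoid one letter, so there are at most `(2N - 1)^m` such `h`. Spheres have at
least `(2N - 1)^n` elements, so `b n = (2N - 1)^(n/2) |λ n|` satisfies `∑ b n ^ 2 ≤ 1`. Each of
the `|g| + 1` splittings `t + s = |g|` then contributes
`(2N - 1)^(-|g|/2) ∑ₘ b (t + m) b (s + m) ≤ (2N - 1)^(-|g|/2)` by AM-GM.
-/

open scoped ENNReal

theorem ENNReal.two_mul_le_add_sq (a b : ℝ≥0∞) : 2 * a * b ≤ a ^ 2 + b ^ 2 := by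
  induction a using ENNReal.recTopCoe with
  | top => simp
  | coe a =>
    induction b using ENNReal.recTopCoe with
    | top => simp
    | coe b => exact_mod_cast _root_.two_mul_le_add_sq a b

theorem ENNReal.tsum_mul_shift_le_one {b : ℕ → ℝ≥0∞} (hb : ∑' n, b n ^ 2 ≤ 1) (t s : ℕ) :
    ∑' m, b (t + m) * b (s + m) ≤ 1 := by
  have hshift (k : ℕ) : ∑' m, b (k + m) ^ 2 ≤ 1 :=
    (ENNReal.tsum_comp_le_tsum_of_injective (add_right_injective k) (b · ^ 2)).trans hb
  have : 2 * ∑' m, b (t + m) * b (s + m) ≤ 2 * 1 :=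
    calc 2 * ∑' m, b (t + m) * b (s + m)
        ≤ ∑' m, (b (t + m) ^ 2 + b (s + m) ^ 2) := by
          rw [← ENNReal.tsum_mul_left]
          exact ENNReal.tsum_le_tsum fun m => (mul_assoc 2 _ _).ge.trans (two_mul_le_add_sq _ _)
      _ = ∑' m, b (t + m) ^ 2 + ∑' m, b (s + m) ^ 2 := ENNReal.tsum_add
      _ ≤ 2 * 1 := by rw [two_mul]; exact add_le_add (hshift t) (hshift s)
  exact (ENNReal.mul_le_mul_iff_right two_ne_zero ENNReal.ofNat_ne_top).mp this

theorem ENNReal.tsum_pow_mul_mul_le {r : ℝ≥0∞} (hr₀ : r ≠ 0) (hr : r ≠ ⊤) {a : ℕ → ℝ≥0∞}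
    (ha : ∑' n, r ^ n * a n ^ 2 ≤ 1) {t s p : ℕ} (hts : t + s = p) :
    ∑' m, r ^ m * (a (t + m) * a (s + m)) ≤ r ^ (-(p : ℝ) / 2) := by
  set b : ℕ → ℝ≥0∞ := fun n => r ^ ((n : ℝ) / 2) * a n
  have hb : ∑' n, b n ^ 2 ≤ 1 := by
    refine le_of_eq_of_le (tsum_congr fun n => ?_) ha
    rw [mul_pow, ← ENNReal.rpow_natCast, ← ENNReal.rpow_mul, ← ENNReal.rpow_natCast r n]
    congr 2
    ring
  have hm (m : ℕ) : r ^ m * (a (t + m) * a (s + m)) =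
      r ^ (-(p : ℝ) / 2) * (b (t + m) * b (s + m)) := by
    have : r ^ m =
        r ^ (-(p : ℝ) / 2) * r ^ (((t + m : ℕ) : ℝ) / 2) * r ^ (((s + m : ℕ) : ℝ) / 2) := by
      rw [← ENNReal.rpow_add _ _ hr₀ hr, ← ENNReal.rpow_add _ _ hr₀ hr, ← ENNReal.rpow_natCast,
        ← hts]
      congr 1
      push_cast
      ring
    rw [this]
    ring
  calc ∑' m, r ^ m * (a (t + m) * a (s + m))
      = r ^ (-(p : ℝ) / 2) * ∑' m, b (t + m) * b (s + m) := by
        simp_rw [hm]; exact ENNReal.tsum_mul_left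
    _ ≤ r ^ (-(p : ℝ) / 2) := mul_le_of_le_one_right' (ENNReal.tsum_mul_shift_le_one hb t s)

theorem norm_le_of_enorm_le_mul_rpow {E : Type*} [SeminormedAddGroup E] {x : E} {c r : ℝ≥0∞}
    {y : ℝ} (hc : c ≠ ⊤) (hr₀ : r ≠ 0) (hr : r ≠ ⊤) (h : ‖x‖ₑ ≤ c * r ^ y) :
    ‖x‖ ≤ c.toReal * r.toReal ^ y := by
  rw [← toReal_enorm, ENNReal.toReal_rpow, ← ENNReal.toReal_mul]
  exact ENNReal.toReal_mono (ENNReal.mul_ne_top hc (ENNReal.rpow_ne_top_of_ne_zero hr₀ hr)) h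

theorem two_mul_card_sub_one_ne_zero {α : Type*} [Fintype α] [Nonempty α] :
    2 * Fintype.card α - 1 ≠ 0 := by
  have := Fintype.card_pos (α := α)
  omega

theorem ENNReal.tsum_comp_eq_tsum_card_mul {β γ : Type*} (κ : β → γ) (F : γ → ℝ≥0∞) :
    ∑' b, F (κ b) = ∑' c, (ENat.card (κ ⁻¹' {c}) : ℝ≥0∞) * F c := by
  rw [← ENNReal.tsum_fiberwise _ κ]
  refine tsum_congr fun c => ?_
  rw [← ENNReal.tsum_const]
  exact tsum_congr fun b => by rw [b.2]

namespace FreeGroup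

variable {α : Type*} [DecidableEq α]

theorem isReduced_invRev {L : List (α × Bool)} (h : IsReduced L) : IsReduced (invRev L) :=
  isReduced_iff_reduce_eq.mpr (by rw [reduce_invRev, h.reduce_eq])

omit [DecidableEq α] in
theorem IsReduced.getLast_cons {L w : List (α × Bool)} (h : IsReduced (L ++ w)) (hL : L ≠ []) :
    IsReduced (L.getLast hL :: w) := by
  refine h.infix (List.IsSuffix.isInfix ⟨L.dropLast, ?_⟩)
  rw [← List.singleton_append, ← List.append_assoc, List.dropLast_append_getLast]

theorem IsReduced.exists_common_prefix :
    ∀ {x w : List (α × Bool)}, IsReduced x → IsReduced w →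
      ∃ c x' w', x = c ++ x' ∧ w = c ++ w' ∧ IsReduced (invRev x' ++ w')
  | [], w, _, hw => ⟨[], [], w, rfl, rfl, hw⟩
  | x, [], hx, _ => ⟨[], x, [], rfl, rfl, by simpa using isReduced_invRev hx⟩
  | a :: x, b :: w, hx, hw => by
    by_cases hab : a = b
    · subst hab
      obtain ⟨c, x', w', rfl, rfl, hr⟩ := exists_common_prefix hx.tail hw.tail
      exact ⟨a :: c, x', w', rfl, rfl, hr⟩
    · refine ⟨[], a :: x, b :: w, rfl, rfl, ?_⟩
      rw [invRev_cons]
      refine .append_overlap (invRev_cons ▸ isReduced_invRev hx) ?_ (by simp [invRev])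
      refine isReduced_cons_cons.mpr ⟨fun h => ?_, hw⟩
      obtain ⟨a₁, a₂⟩ := a
      obtain ⟨b₁, b₂⟩ := b
      cases a₂ <;> cases b₂ <;> simp_all

theorem exists_common_prefix_toWord (g h : FreeGroup α) :
    ∃ c v w, g.toWord = c ++ v ∧ h.toWord = c ++ w ∧ (g⁻¹ * h).toWord = invRev v ++ w := by
  obtain ⟨c, v, w, hg, hh, hr⟩ :=
    IsReduced.exists_common_prefix (isReduced_toWord (x := g)) (isReduced_toWord (x := h))
  refine ⟨c, v, w, hg, hh, ?_⟩
  have : g⁻¹ * h = mk (invRev v ++ w) := by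
    rw [← mk_toWord (x := g), ← mk_toWord (x := h), hg, hh, ← mul_mk, ← mul_mk, ← mul_mk,
      ← inv_mk]
    group
  rw [this, toWord_mk, hr.reduce_eq]

theorem exists_toWord_eq_of_norm_eq {g h : FreeGroup α} {t s m : ℕ} (hts : t + s = g.norm)
    (hh : h.norm = t + m) (hgh : (g⁻¹ * h).norm = s + m) :
    ∃ w, h.toWord = g.toWord.take t ++ w ∧ IsReduced (invRev (g.toWord.drop t) ++ w) ∧
      w.length = m := by
  obtain ⟨c, v, w, hg, hh', hgh'⟩ := exists_common_prefix_toWord g h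
  simp only [norm, hg, hh', hgh', List.length_append, invRev_length] at hts hh hgh
  have hc : c.length = t := by omega
  refine ⟨w, ?_, ?_, by omega⟩
  · rw [hh', hg, ← hc, List.take_left]
  · rw [hg, ← hc, List.drop_left, ← hgh']
    exact isReduced_toWord

def continuations (a : α × Bool) (m : ℕ) : Set (List (α × Bool)) :=
  {w | IsReduced (a :: w) ∧ w.length = m}

variable [Fintype α]

instance (a : α × Bool) (m : ℕ) : Finite (continuations a m) :=
  (List.finite_length_eq (α × Bool) m).subset fun _ hw => hw.2

theorem card_subtype_fst_eq_imp_snd_eq (a : α × Bool) :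
    Fintype.card {b : α × Bool // a.1 = b.1 → a.2 = b.2} = 2 * Fintype.card α - 1 := by
  have hb : ∀ b : α × Bool, (a.1 = b.1 → a.2 = b.2) ↔ ¬ b = (a.1, !a.2) := by
    rintro ⟨b₁, b₂⟩
    cases a.2 <;> cases b₂ <;> simp [eq_comm]
  rw [Fintype.card_congr (Equiv.subtypeEquivRight hb), Fintype.card_subtype_compl,
    Fintype.card_subtype_eq, Fintype.card_prod, Fintype.card_bool, mul_comm]

theorem natCard_continuations (a : α × Bool) (m : ℕ) :
    Nat.card (continuations a m) = (2 * Fintype.card α - 1) ^ m := by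
  induction m generalizing a with
  | zero =>
    have : continuations a 0 = {[]} := by ext w; simp +contextual [continuations]
    simp [this]
  | succ m ih =>
    let cons : (Σ b : {b : α × Bool // a.1 = b.1 → a.2 = b.2}, continuations b.1 m) →
        continuations a (m + 1) := fun x =>
      ⟨x.1.1 :: x.2.1, isReduced_cons_cons.mpr ⟨x.1.2, x.2.2.1⟩, by simp [x.2.2.2]⟩
    have hcons : Function.Bijective cons := by
      refine ⟨fun ⟨⟨b, hb⟩, ⟨w, hw⟩⟩ ⟨⟨b', hb'⟩, ⟨w', hw'⟩⟩ h => ?_, fun ⟨l, hl, hlen⟩ => ?_⟩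
      · obtain ⟨rfl, rfl⟩ := List.cons_eq_cons.mp (congrArg Subtype.val h)
        rfl
      · obtain ⟨b, w, rfl⟩ := List.exists_cons_of_length_eq_add_one hlen
        obtain ⟨hab, hw⟩ := isReduced_cons_cons.mp hl
        exact ⟨⟨⟨b, hab⟩, ⟨w, hw, by simpa using hlen⟩⟩, rfl⟩
    rw [← Nat.card_eq_of_bijective cons hcons, Nat.card_sigma]
    simp [ih, card_subtype_fst_eq_imp_snd_eq, pow_succ, mul_comm]

theorem pow_le_card_sphere [Nonempty α] (n : ℕ) :
    (((2 * Fintype.card α - 1) ^ n : ℕ) : ℕ∞) ≤ ENat.card (norm ⁻¹' {n} : Set (FreeGroup α)) := by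
  obtain ⟨a⟩ : Nonempty (α × Bool) := inferInstance
  rw [← natCard_continuations a n, ← ENat.card_eq_coe_natCard]
  have toWord_mk_of_mem (w : continuations a n) : (mk w.1).toWord = w.1 := by
    rw [toWord_mk, IsReduced.reduce_eq (L := w.1) w.2.1.tail]
  refine ENat.card_le_card_of_injective (f := fun w => ⟨mk w.1, ?_⟩) fun w w' h => ?_
  · simp [norm, toWord_mk_of_mem w, w.2.2]
  · exact Subtype.ext (by simpa [toWord_mk_of_mem] using congrArg (toWord ∘ Subtype.val) h)

theorem card_fiber_le (g : FreeGroup α) (hg : g ≠ 1) {t s : ℕ} (hts : t + s = g.norm) (m : ℕ) :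
    ENat.card ((fun h => (h.norm, (g⁻¹ * h).norm)) ⁻¹' {(t + m, s + m)}) ≤
      (((2 * Fintype.card α - 1) ^ m : ℕ) : ℕ∞) := by
  set L := g.toWord
  have hL : L.length = t + s := hts.symm
  have hL₀ : L ≠ [] := by rwa [Ne, toWord_eq_nil_iff]
  -- `w` is preceded by the common prefix `L.take t`, or by `(L.drop t)⁻¹` when that prefix is empty
  obtain ⟨P, hP, hPw⟩ : ∃ P ≠ [], ∀ w, IsReduced (L.take t ++ w) →
      IsReduced (invRev (L.drop t) ++ w) → IsReduced (P ++ w) := by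
    rcases t.eq_zero_or_pos with rfl | ht
    · exact ⟨invRev L, by simpa [invRev] using hL₀, fun w _ hw => by simpa using hw⟩
    · exact ⟨L.take t, by simp [ht.ne', hL₀], fun w hw _ => hw⟩
  have hfiber : ∀ h ∈ (fun h => (h.norm, (g⁻¹ * h).norm)) ⁻¹' {(t + m, s + m)},
      ∃ w, h.toWord = L.take t ++ w ∧ w ∈ continuations (P.getLast hP) m := by
    intro h hh
    simp only [Set.mem_preimage, Set.mem_singleton_iff, Prod.mk.injEq] at hh
    obtain ⟨w, hhw, hw, hlen⟩ := exists_toWord_eq_of_norm_eq hts hh.1 hh.2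
    exact ⟨w, hhw, (hPw w (hhw ▸ isReduced_toWord) hw).getLast_cons hP, hlen⟩
  have htake : (L.take t).length = t := by simp [hL]
  rw [← natCard_continuations (P.getLast hP) m, ← ENat.card_eq_coe_natCard]
  refine ENat.card_le_card_of_injective (f := fun h => ⟨h.1.toWord.drop t, ?_⟩) fun h h' hh => ?_
  · obtain ⟨w, hhw, hw⟩ := hfiber h.1 h.2
    rwa [hhw, List.drop_left' htake]
  · obtain ⟨w, hhw, -⟩ := hfiber h.1 h.2
    obtain ⟨w', hhw', -⟩ := hfiber h'.1 h'.2
    have hww' : w = w' := by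
      simpa [hhw, hhw', List.drop_left' htake] using congrArg Subtype.val hh
    exact Subtype.ext (toWord_injective (by rw [hhw, hhw', hww']))

theorem tsum_pow_mul_le_tsum_norm [Nonempty α] (f : ℕ → ℝ≥0∞) :
    ∑' n, ((2 * Fintype.card α - 1 : ℕ) : ℝ≥0∞) ^ n * f n ≤ ∑' h : FreeGroup α, f h.norm := by
  rw [ENNReal.tsum_comp_eq_tsum_card_mul]
  refine ENNReal.tsum_le_tsum fun n => mul_le_mul_left ?_ _
  simpa using ENat.toENNReal_le.mpr (pow_le_card_sphere (α := α) n)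

open Finset in
theorem tsum_norm_norm_le (g : FreeGroup α) (hg : g ≠ 1) (f : ℕ → ℕ → ℝ≥0∞) :
    ∑' h, f h.norm (g⁻¹ * h).norm ≤
      ∑ x ∈ antidiagonal g.norm, ∑' m : ℕ,
        ((2 * Fintype.card α - 1 : ℕ) : ℝ≥0∞) ^ m * f (x.1 + m) (x.2 + m) := by
  set κ := fun h : FreeGroup α => (h.norm, (g⁻¹ * h).norm)
  let ι : antidiagonal g.norm × ℕ → ℕ × ℕ := fun x => (x.1.1.1 + x.2, x.1.1.2 + x.2)
  have hι : ι.Injective := by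
    rintro ⟨⟨⟨t, s⟩, hts⟩, m⟩ ⟨⟨⟨t', s'⟩, hts'⟩, m'⟩ h
    simp only [ι, HasAntidiagonal.mem_antidiagonal, Prod.mk.injEq] at hts hts' h
    obtain rfl : m = m' := by omega
    obtain ⟨rfl, rfl⟩ : t = t' ∧ s = s' := by omega
    rfl
  have hsupp : Function.support (fun ij => (ENat.card (κ ⁻¹' {ij}) : ℝ≥0∞) * f ij.1 ij.2) ⊆
      Set.range ι := by
    intro ij hij
    obtain ⟨h, rfl⟩ : ∃ h, κ h = ij := by
      by_contra! hempty
      simp [Set.preimage, hempty] at hij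
    obtain ⟨c, v, w, hgw, hhw, hghw⟩ := exists_common_prefix_toWord g h
    refine ⟨⟨⟨(c.length, v.length), by simp [norm, hgw]⟩, w.length⟩, ?_⟩
    simp [ι, κ, norm, hhw, hghw]
  calc ∑' h, f h.norm (g⁻¹ * h).norm
      = ∑' ij, (ENat.card (κ ⁻¹' {ij}) : ℝ≥0∞) * f ij.1 ij.2 :=
        ENNReal.tsum_comp_eq_tsum_card_mul κ fun ij => f ij.1 ij.2
    _ = ∑' x, (ENat.card (κ ⁻¹' {ι x}) : ℝ≥0∞) * f (ι x).1 (ι x).2 := (hι.tsum_eq hsupp).symm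
    _ ≤ ∑' x : antidiagonal g.norm × ℕ,
          ((2 * Fintype.card α - 1 : ℕ) : ℝ≥0∞) ^ x.2 * f (ι x).1 (ι x).2 := by
        refine ENNReal.tsum_le_tsum fun ⟨⟨x, hx⟩, m⟩ => mul_le_mul_left ?_ _
        simpa using ENat.toENNReal_le.mpr
          (card_fiber_le g hg (HasAntidiagonal.mem_antidiagonal.mp hx) m)
    _ = _ := by
        rw [ENNReal.tsum_prod', Finset.tsum_subtype (antidiagonal g.norm)
          fun x => ∑' m : ℕ, ((2 * Fintype.card α - 1 : ℕ) : ℝ≥0∞) ^ m * f (x.1 + m) (x.2 + m)]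

open Finset in
theorem tsum_norm_mul_norm_le [Nonempty α] (g : FreeGroup α) (hg : g ≠ 1) (a : ℕ → ℝ≥0∞)
    (ha : ∑' h : FreeGroup α, a h.norm ^ 2 ≤ 1) :
    ∑' h, a h.norm * a (g⁻¹ * h).norm ≤
      (g.norm + 1) * ((2 * Fintype.card α - 1 : ℕ) : ℝ≥0∞) ^ (-(g.norm : ℝ) / 2) := by
  set K : ℕ := 2 * Fintype.card α - 1
  have hK : (K : ℝ≥0∞) ≠ 0 := Nat.cast_ne_zero.mpr two_mul_card_sub_one_ne_zero
  have hKa : ∑' n, (K : ℝ≥0∞) ^ n * a n ^ 2 ≤ 1 :=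
    (tsum_pow_mul_le_tsum_norm (a · ^ 2)).trans ha
  calc ∑' h, a h.norm * a (g⁻¹ * h).norm
      ≤ ∑ x ∈ antidiagonal g.norm, ∑' m, (K : ℝ≥0∞) ^ m * (a (x.1 + m) * a (x.2 + m)) :=
        tsum_norm_norm_le g hg fun i j => a i * a j
    _ ≤ ∑ x ∈ antidiagonal g.norm, (K : ℝ≥0∞) ^ (-(g.norm : ℝ) / 2) :=
        sum_le_sum fun x hx => ENNReal.tsum_pow_mul_mul_le hK (ENNReal.natCast_ne_top K) hKa
          (HasAntidiagonal.mem_antidiagonal.mp hx)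
    _ = (g.norm + 1) * (K : ℝ≥0∞) ^ (-(g.norm : ℝ) / 2) := by simp

end FreeGroup

theorem stmt_15_general (N : ℕ)
    (ξ : FreeGroup (Fin N) → ℂ)
    (hradial : ∃ lam : ℕ → ℂ, ∀ g : FreeGroup (Fin N), ξ g = lam g.norm)
    (hl2 : Summable fun h : FreeGroup (Fin N) => ‖ξ h‖ ^ 2)
    (hunit : (∑' h : FreeGroup (Fin N), ‖ξ h‖ ^ 2) = 1)
    (φ : FreeGroup (Fin N) → ℂ)
    (hφ : ∀ g : FreeGroup (Fin N),
      φ g = ∑' h : FreeGroup (Fin N), (starRingEnd ℂ) (ξ (g⁻¹ * h)) * ξ h) :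
    ∀ g : FreeGroup (Fin N),
      ‖φ g‖ ≤ ((g.norm : ℝ) + 1) * ((2 * N - 1 : ℝ)) ^ (-(g.norm : ℝ) / 2) := by
  obtain ⟨lam, hlam⟩ := hradial
  set a : ℕ → ℝ≥0∞ := fun n => ‖lam n‖ₑ
  have hsphere : ∑' h : FreeGroup (Fin N), a h.norm ^ 2 = 1 := by
    rw [← ENNReal.ofReal_one, ← hunit, ENNReal.ofReal_tsum_of_nonneg (fun _ => by positivity) hl2]
    refine tsum_congr fun h => ?_
    rw [hlam, ENNReal.ofReal_pow (norm_nonneg _), ofReal_norm]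
  intro g
  have hφg : ‖φ g‖ₑ ≤ ∑' h, a h.norm * a (g⁻¹ * h).norm := by
    rw [hφ]
    refine enorm_tsum_le_tsum_enorm.trans (le_of_eq (tsum_congr fun h => ?_))
    rw [enorm_mul, RCLike.enorm_conj, hlam, hlam, mul_comm]
  rcases eq_or_ne g 1 with rfl | hg
  · have : ‖φ 1‖ₑ ≤ 1 := by simpa [← sq, hsphere] using hφg
    simpa [← ofReal_norm, ENNReal.ofReal_le_one] using this
  have : Nonempty (Fin N) := not_isEmpty_iff.mp fun _ => hg (Subsingleton.elim _ _)
  have hK : 2 * Fintype.card (Fin N) - 1 ≠ 0 := two_mul_card_sub_one_ne_zero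
  have hbound := norm_le_of_enorm_le_mul_rpow (by simp) (Nat.cast_ne_zero.mpr hK)
    (ENNReal.natCast_ne_top _) (hφg.trans (FreeGroup.tsum_norm_mul_norm_le g hg a hsphere.le))
  rw [Fintype.card_fin] at hK hbound
  rw [ENNReal.toReal_natCast, Nat.cast_sub (by omega)] at hbound
  simpa [ENNReal.toReal_add] using hbound

theorem stmt_15 (N : ℕ) (hN : 1 ≤ N)
    (ξ : FreeGroup (Fin N) → ℂ)
    (hradial : ∃ lam : ℕ → ℂ, ∀ g : FreeGroup (Fin N), ξ g = lam g.norm)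
    (hl2 : Summable fun h : FreeGroup (Fin N) => ‖ξ h‖ ^ 2)
    (hunit : (∑' h : FreeGroup (Fin N), ‖ξ h‖ ^ 2) = 1)
    (φ : FreeGroup (Fin N) → ℂ)
    (hφ : ∀ g : FreeGroup (Fin N),
      φ g = ∑' h : FreeGroup (Fin N), (starRingEnd ℂ) (ξ (g⁻¹ * h)) * ξ h) :
    ∀ g : FreeGroup (Fin N),
      ‖φ g‖ ≤ ((g.norm : ℝ) + 1) * ((2 * N - 1 : ℝ)) ^ (-(g.norm : ℝ) / 2) :=
  stmt_15_general N ξ hradial hl2 hunit φ hφ
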